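/- Suppose N is compact Kähler with nonnegative holomorphic bisectional curvature, u solves harmonic map flow on Σ×[0,T) with E_∂̄(u(0)) ≤ δ² < ε₀, and |∂̄u(t)| ≤ Cδ(1/√τ + 1) for τ ≤ t < T. Then the stress-energy tensor satisfies the uniform L² bound ‖S(u(t))‖²_{L²(Σ)} ≤ C δ²(2δ² + κ)(1/τ + 1) for τ ≤ t < T, where κ = E_∂(u(0)) − E_∂̄(u(0)) is the topological invariant ∫_Σ u*ω_N. -/

import Mathlib

open MeasureTheory

/-! Squaring `|S| ≤ 4√(e_∂ e_∂̄)` and inserting the sup bound on `e_∂̄ = |∂̄u|²` gives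
`‖S(u(t))‖²_{L²} ≤ 16 sup e_∂̄ · E_∂(u(t))`. Since `E_∂` is nonincreasing, `E_∂(u(t)) ≤ E_∂(u(0))
≤ 2δ² + κ`, and `(1/√τ + 1)² ≤ 2(1/τ + 1)` turns the sup bound into the stated rate. -/

lemma sq_le_sixteen_mul_of_le_four_sqrt {s a b B : ℝ} (hs : 0 ≤ s) (ha : 0 ≤ a) (hb : 0 ≤ b)
    (hsab : s ≤ 4 * √(a * b)) (hbB : b ≤ B) : s ^ 2 ≤ 16 * B * a :=
  calc s ^ 2 ≤ (4 * √(a * b)) ^ 2 := pow_le_pow_left₀ hs hsab 2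
    _ = 16 * (a * b) := by rw [mul_pow, Real.sq_sqrt (mul_nonneg ha hb)]; norm_num
    _ ≤ 16 * (a * B) := by gcongr
    _ = 16 * B * a := by ring

lemma integral_sq_le_of_le_four_sqrt {X : Type*} [MeasurableSpace X] (μ : Measure X)
    {S e e' : X → ℝ} {B : ℝ} (hS : ∀ x, 0 ≤ S x) (he : ∀ x, 0 ≤ e x) (he' : ∀ x, 0 ≤ e' x)
    (hSe : ∀ x, S x ≤ 4 * √(e x * e' x)) (he'B : ∀ x, e' x ≤ B)
    (hS_int : Integrable (fun x => S x ^ 2) μ) (he_int : Integrable e μ) :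
    ∫ x, S x ^ 2 ∂μ ≤ 16 * B * ∫ x, e x ∂μ := by
  rw [← integral_const_mul]
  exact integral_mono hS_int (he_int.const_mul _) fun x =>
    sq_le_sixteen_mul_of_le_four_sqrt (hS x) (he x) (he' x) (hSe x) (he'B x)

lemma one_div_sqrt_add_one_sq_le {τ : ℝ} (hτ : 0 ≤ τ) : (1 / √τ + 1) ^ 2 ≤ 2 * (1 / τ + 1) := by
  simpa [div_pow, Real.sq_sqrt hτ] using add_sq_le (a := 1 / √τ) (b := 1)

theorem stmt12 {X : Type*} [MeasurableSpace X] (μ : Measure X)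
    (C₁ : ℝ) (hC₁ : 0 < C₁) :
    ∃ C > (0 : ℝ), ∀ (δ κ τ T : ℝ) (ed edb Snorm : ℝ → X → ℝ),
      0 < δ → 0 < τ → τ < T →
      (∀ t x, 0 ≤ ed t x) → (∀ t x, 0 ≤ edb t x) → (∀ t x, 0 ≤ Snorm t x) →
      (∀ t x, Snorm t x ≤ 4 * Real.sqrt (ed t x * edb t x)) →
      (∀ t ∈ Set.Ico τ T, ∀ x, edb t x ≤ (C₁ * δ * (1 / Real.sqrt τ + 1)) ^ 2) →
      (∀ s t : ℝ, s ≤ t → (∫ x, ed t x ∂μ) ≤ ∫ x, ed s x ∂μ) →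
      ((∫ x, ed 0 x ∂μ) ≤ 2 * δ ^ 2 + κ) →
      (∀ t, Integrable (ed t) μ) →
      (∀ t ∈ Set.Ico τ T, Integrable (fun x => (Snorm t x) ^ 2) μ) →
      ∀ t ∈ Set.Ico τ T,
        (∫ x, (Snorm t x) ^ 2 ∂μ) ≤ C * δ ^ 2 * (2 * δ ^ 2 + κ) * (1 / τ + 1) := by
  refine ⟨32 * C₁ ^ 2, by positivity, ?_⟩
  intro δ κ τ T ed edb Snorm _ hτ _ hed hedb hS hSed hedb_sup hmono hE₀ hed_int hS_int t ht
  have hL2 := integral_sq_le_of_le_four_sqrt μ (hS t) (hed t) (hedb t) (hSed t)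
    (hedb_sup t ht) (hS_int t ht) (hed_int t)
  have hE : ∫ x, ed t x ∂μ ≤ 2 * δ ^ 2 + κ := (hmono 0 t (hτ.le.trans ht.1)).trans hE₀
  have hE_nonneg : 0 ≤ ∫ x, ed t x ∂μ := integral_nonneg (hed t)
  have hsup : 16 * (C₁ * δ * (1 / √τ + 1)) ^ 2 ≤ 32 * C₁ ^ 2 * δ ^ 2 * (1 / τ + 1) := by
    have := mul_le_mul_of_nonneg_left (one_div_sqrt_add_one_sq_le hτ.le)
      (by positivity : (0 : ℝ) ≤ 16 * C₁ ^ 2 * δ ^ 2)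
    linarith [show (C₁ * δ * (1 / √τ + 1)) ^ 2 = C₁ ^ 2 * δ ^ 2 * (1 / √τ + 1) ^ 2 by ring]
  calc ∫ x, Snorm t x ^ 2 ∂μ ≤ 16 * (C₁ * δ * (1 / √τ + 1)) ^ 2 * ∫ x, ed t x ∂μ := hL2
    _ ≤ 32 * C₁ ^ 2 * δ ^ 2 * (1 / τ + 1) * (2 * δ ^ 2 + κ) :=
        mul_le_mul hsup hE hE_nonneg (by positivity)
    _ = 32 * C₁ ^ 2 * δ ^ 2 * (2 * δ ^ 2 + κ) * (1 / τ + 1) := by ring
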